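/- If X is countably α-compact and Y is α-compact (every α-open cover has a finite subcover), then the product X × Y is countably compact. -/

import Mathlib

def AlphaOpen {X : Type*} [TopologicalSpace X] (A : Set X) : Prop :=
  A ⊆ interior (closure (interior A))

def AlphaClosed {X : Type*} [TopologicalSpace X] (A : Set X) : Prop :=
  AlphaOpen Aᶜ

def AlphaContinuous {X Y : Type*} [TopologicalSpace X] [TopologicalSpace Y]
    (f : X → Y) : Prop :=
  ∀ V : Set Y, IsOpen V → AlphaOpen (f ⁻¹' V)

def CountablyAlphaCompact (X : Type*) [TopologicalSpace X] : Prop :=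
  ∀ U : ℕ → Set X, (∀ n, AlphaOpen (U n)) → (⋃ n, U n) = Set.univ →
    ∃ t : Finset ℕ, (⋃ n ∈ t, U n) = Set.univ

def AlphaCompact (X : Type*) [TopologicalSpace X] : Prop :=
  ∀ 𝒰 : Set (Set X), (∀ A ∈ 𝒰, AlphaOpen A) → ⋃₀ 𝒰 = Set.univ →
    ∃ 𝒱 ⊆ 𝒰, 𝒱.Finite ∧ ⋃₀ 𝒱 = Set.univ

def CountablyCompact (X : Type*) [TopologicalSpace X] : Prop :=
  ∀ U : ℕ → Set X, (∀ n, IsOpen (U n)) → (⋃ n, U n) = Set.univ →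
    ∃ t : Finset ℕ, (⋃ n ∈ t, U n) = Set.univ

/-! The tube lemma, in the form "the projection `X × Y → X` is closed when `Y` is compact", turns
a countable open cover of `X × Y` into the countable open cover of `X` by the sets of points whose
whole fibre is covered by finitely many members. Countable compactness of `X` picks finitely many
of those, hence finitely many members of the original cover. The α-notions enter only because
open sets are α-open, so α-compactness implies compactness and countable α-compactness implies
countable compactness. -/

open Set

theorem countablyCompact_iff_countablyCompactSpace {X : Type*} [TopologicalSpace X] :
    CountablyCompact X ↔ CountablyCompactSpace X := by
  simp only [CountablyCompact, ← isCountablyCompact_univ_iff,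
    isCountablyCompact_iff_countable_open_cover, univ_subset_iff]

theorem IsOpen.alphaOpen {X : Type*} [TopologicalSpace X] {A : Set X} (hA : IsOpen A) :
    AlphaOpen A := by
  rw [AlphaOpen, hA.interior_eq]
  exact interior_maximal subset_closure hA

theorem CountablyAlphaCompact.countablyCompactSpace {X : Type*} [TopologicalSpace X]
    (hX : CountablyAlphaCompact X) : CountablyCompactSpace X :=
  countablyCompact_iff_countablyCompactSpace.1 fun U hU ↦ hX U fun n ↦ (hU n).alphaOpen

theorem AlphaCompact.compactSpace {X : Type*} [TopologicalSpace X] (hX : AlphaCompact X) :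
    CompactSpace X where
  isCompact_univ := isCompact_generateFrom (TopologicalSpace.generateFrom_setOfPred_isOpen _).symm
    fun P hP hcov ↦ (hX P (fun _ hA ↦ (hP hA).alphaOpen) (univ_subset_iff.1 hcov)).imp
      fun _ ⟨hQP, hQ, hQcov⟩ ↦ ⟨hQP, hQ, hQcov.ge⟩

instance Prod.countablyCompactSpace {X Y : Type*} [TopologicalSpace X] [TopologicalSpace Y]
    [CountablyCompactSpace X] [CompactSpace Y] : CountablyCompactSpace (X × Y) := by
  rw [← isCountablyCompact_univ_iff, isCountablyCompact_iff_countable_open_cover]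
  intro U hU hcov
  let W : Finset ℕ → Set X := fun t ↦ (Prod.fst '' (⋃ m ∈ t, U m)ᶜ)ᶜ
  have hW_open : ∀ t, IsOpen (W t) := fun t ↦
    (isClosedMap_fst_of_compactSpace _ (isOpen_biUnion fun m _ ↦ hU m).isClosed_compl).isOpen_compl
  have hW_cover : univ ⊆ ⋃ t, W t := by
    intro x _
    obtain ⟨t, ht⟩ := ((isCompact_singleton (x := x)).prod isCompact_univ).elim_finite_subcover U hU
      fun p _ ↦ hcov (mem_univ p)
    refine mem_iUnion.2 ⟨t, ?_⟩
    rintro ⟨⟨x', y⟩, hxy, rfl⟩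
    exact hxy (ht ⟨mem_singleton _, mem_univ y⟩)
  obtain ⟨s, hs⟩ :=
    CountablyCompactSpace.isCountablyCompact_univ.elim_finite_subcover hW_open hW_cover
  refine ⟨s.biUnion id, fun ⟨x, y⟩ _ ↦ ?_⟩
  obtain ⟨t, hts, hxt⟩ := mem_iUnion₂.1 (hs (mem_univ x))
  have hxy : (x, y) ∈ ⋃ m ∈ t, U m := by_contra fun h ↦ hxt ⟨(x, y), h, rfl⟩
  obtain ⟨m, hmt, hm⟩ := mem_iUnion₂.1 hxy
  exact mem_iUnion₂.2 ⟨m, Finset.mem_biUnion.2 ⟨t, hts, hmt⟩, hm⟩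

theorem stmt17 {X Y : Type*} [TopologicalSpace X] [TopologicalSpace Y]
    (hX : CountablyAlphaCompact X) (hY : AlphaCompact Y) :
    CountablyCompact (X × Y) := by
  have := hX.countablyCompactSpace
  have := hY.compactSpace
  exact countablyCompact_iff_countablyCompactSpace.2 inferInstance
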